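/- arXiv:2510.08822 — 3 statements merged into one kernel-verified Lean document; each statement's English description precedes it below -/
import Mathlib

section
/- Let m ≥ 3 and let q : EuclideanSpace ℝ (Fin m) → ℝ be infinitely differentiable with compact support. Assume that for every unit vector v (‖v‖ = 1) the marginal along v is radial on the hyperplane orthogonal to v: for all x, y with ⟪x, v⟫ = 0, ⟪y, v⟫ = 0 and ‖x‖ = ‖y‖, one has ∫_ℝ q(x + t • v) dt = ∫_ℝ q(y + t • v) dt. Then q is radial. -/
open MeasureTheory
open scoped RealInnerProductSpace FourierTransform

noncomputable def liftW {n : ℕ} (b : OrthonormalBasis (Fin (n+1)) ℝ (EuclideanSpace ℝ (Fin (n+1))))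
    (w : Fin n → ℝ) : EuclideanSpace ℝ (Fin (n+1)) :=
  b.repr.symm ((EuclideanSpace.equiv (Fin (n+1)) ℝ).symm (Fin.cons 0 w))

lemma liftW_inner {n : ℕ} (b : OrthonormalBasis (Fin (n+1)) ℝ (EuclideanSpace ℝ (Fin (n+1))))
    (w : Fin n → ℝ) : ⟪liftW b w, b 0⟫ = 0 := by
  rw [real_inner_comm, ← b.repr_apply_apply]
  simp [liftW]

lemma slice9 {n : ℕ} (f : EuclideanSpace ℝ (Fin (n+1)) → ℂ) (hf : Integrable f)
    (b : OrthonormalBasis (Fin (n+1)) ℝ (EuclideanSpace ℝ (Fin (n+1))))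
    {ξ : EuclideanSpace ℝ (Fin (n+1))} (hξ : ⟪ξ, b 0⟫ = 0) :
    𝓕 f ξ = ∫ w : Fin n → ℝ,
      𝐞 (-⟪liftW b w, ξ⟫) • ∫ t : ℝ, f (liftW b w + t • b 0) := by
  set e1 := MeasurableEquiv.piFinSuccAbove (fun _ : Fin (n+1) => ℝ) 0 with he1
  set e2 := (MeasurableEquiv.toLp 2 (Fin (n+1) → ℝ)).symm with he2
  set Φ : ℝ × (Fin n → ℝ) → EuclideanSpace ℝ (Fin (n+1)) :=
    fun p => b.repr.symm (e2.symm (e1.symm p)) with hΦdef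
  have hΦmp : MeasurePreserving Φ volume volume := by
    exact b.measurePreserving_repr_symm.comp
      (((EuclideanSpace.volume_preserving_symm_measurableEquiv_toLp (Fin (n+1))).symm e2).comp
        ((volume_preserving_piFinSuccAbove (fun _ : Fin (n+1) => ℝ) 0).symm e1))
  have hΦemb : MeasurableEmbedding Φ :=
    (b.repr.symm.toHomeomorph.measurableEmbedding).comp
      ((e2.symm.measurableEmbedding).comp (e1.symm.measurableEmbedding))
  have hΦ : ∀ t (w : Fin n → ℝ), Φ (t, w) = liftW b w + t • b 0 := by
    intro t w
    apply b.repr.injective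
    rw [map_add, _root_.map_smul]
    simp only [Φ, liftW, LinearIsometryEquiv.apply_symm_apply, OrthonormalBasis.repr_self]
    ext i
    induction i using Fin.cases with
    | zero =>
        simp [e1, e2, MeasurableEquiv.piFinSuccAbove, MeasurableEquiv.coe_toLp,
          PiLp.toLp_apply, EuclideanSpace.single_apply, EuclideanSpace.equiv]
    | succ i =>
        simp [e1, e2, MeasurableEquiv.piFinSuccAbove, MeasurableEquiv.coe_toLp,
          PiLp.toLp_apply, EuclideanSpace.single_apply, EuclideanSpace.equiv,
          Fin.succ_ne_zero]
  have hcore : ∀ (w : Fin n → ℝ) (t : ℝ), ⟪liftW b w + t • b 0, ξ⟫ = ⟪liftW b w, ξ⟫ := by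
    intro w t
    have h0 : ⟪b 0, ξ⟫ = 0 := by rw [real_inner_comm]; exact hξ
    rw [inner_add_left, real_inner_smul_left, h0, mul_zero, add_zero]
  have hInt : Integrable (fun p : ℝ × (Fin n → ℝ) => 𝐞 (-⟪Φ p, ξ⟫) • f (Φ p)) volume := by
    have h1 : Integrable (fun z => 𝐞 (-⟪z, ξ⟫) • f z) volume :=
      (Real.fourierIntegral_convergent_iff ξ).2 hf
    exact (hΦmp.integrable_comp_emb hΦemb).2 h1
  have step1 : 𝓕 f ξ = ∫ p : ℝ × (Fin n → ℝ), 𝐞 (-⟪Φ p, ξ⟫) • f (Φ p) := by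
    rw [Real.fourier_eq]
    exact (hΦmp.integral_comp hΦemb (fun z => 𝐞 (-⟪z, ξ⟫) • f z)).symm
  rw [step1, Measure.volume_eq_prod, MeasureTheory.integral_prod_symm _ ?_]
  · refine integral_congr_ae (Filter.Eventually.of_forall fun w => ?_)
    simp only [hΦ, hcore, Circle.smul_def]
    exact integral_const_mul _ _
  · rwa [← Measure.volume_eq_prod]

lemma exists_unit_orth (m : ℕ) (hm : 3 ≤ m) (ξ η : EuclideanSpace ℝ (Fin m)) :
    ∃ v : EuclideanSpace ℝ (Fin m), ‖v‖ = 1 ∧ ⟪ξ, v⟫ = 0 ∧ ⟪η, v⟫ = 0 := by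
  classical
  set K := Submodule.span ℝ ({ξ, η} : Set (EuclideanSpace ℝ (Fin m))) with hK
  have hbot : Kᗮ ≠ ⊥ := by
    intro h
    have h1 := Submodule.finrank_add_finrank_orthogonal (K := K)
    have h2 : Module.finrank ℝ K ≤ 2 := by
      refine (finrank_span_le_card _).trans ?_
      rw [Set.toFinset_insert, Set.toFinset_singleton]
      exact (Finset.card_insert_le _ _).trans (by simp)
    rw [h, finrank_bot] at h1
    have h3 : Module.finrank ℝ (EuclideanSpace ℝ (Fin m)) = m := by simp
    omega
  obtain ⟨v0, hv0mem, hv0ne⟩ := Submodule.exists_mem_ne_zero_of_ne_bot hbot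
  have hn : ‖v0‖ ≠ 0 := norm_ne_zero_iff.2 hv0ne
  refine ⟨‖v0‖⁻¹ • v0, ?_, ?_, ?_⟩
  · rw [norm_smul, norm_inv, norm_norm, inv_mul_cancel₀ hn]
  · exact (Submodule.mem_orthogonal K _).1 (Kᗮ.smul_mem _ hv0mem) ξ
      (Submodule.subset_span (by simp))
  · exact (Submodule.mem_orthogonal K _).1 (Kᗮ.smul_mem _ hv0mem) η
      (Submodule.subset_span (by simp))

lemma schwartz_of_compact {m : ℕ} (f : EuclideanSpace ℝ (Fin m) → ℂ)
    (hf : ContDiff ℝ (⊤ : ℕ∞) f) (hsupp : HasCompactSupport f) :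
    ∃ Q : SchwartzMap (EuclideanSpace ℝ (Fin m)) ℂ, ⇑Q = f := by
  refine ⟨⟨f, hf.of_le (by simp), ?_⟩, rfl⟩
  intro k N
  set g : EuclideanSpace ℝ (Fin m) → ℝ := fun x => ‖x‖ ^ k * ‖iteratedFDeriv ℝ N f x‖ with hg
  have hgc : Continuous g := (continuous_norm.pow k).mul
    ((hf.continuous_iteratedFDeriv (by exact_mod_cast le_top)).norm)
  have hgs : HasCompactSupport g := ((hsupp.iteratedFDeriv N).norm).mul_left
  obtain ⟨C, hC⟩ := hgc.bddAbove_range_of_hasCompactSupport hgs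
  exact ⟨C, fun x => hC ⟨x, rfl⟩⟩

theorem stmt2 (m : ℕ) (hm : 3 ≤ m) (q : EuclideanSpace ℝ (Fin m) → ℝ)
    (hq : ContDiff ℝ (⊤ : ℕ∞) q) (hsupp : HasCompactSupport q)
    (hmarg : ∀ v : EuclideanSpace ℝ (Fin m), ‖v‖ = 1 →
      ∀ x y : EuclideanSpace ℝ (Fin m), ⟪x, v⟫ = 0 → ⟪y, v⟫ = 0 → ‖x‖ = ‖y‖ →
        (∫ t : ℝ, q (x + t • v)) = ∫ t : ℝ, q (y + t • v)) :
    ∀ x y : EuclideanSpace ℝ (Fin m), ‖x‖ = ‖y‖ → q x = q y := by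
  classical
  obtain ⟨n, rfl⟩ : ∃ n, m = n + 1 := ⟨m - 1, by omega⟩
  set f : EuclideanSpace ℝ (Fin (n+1)) → ℂ := fun z => (q z : ℂ) with hfdef
  have hfc : Continuous f := Complex.continuous_ofReal.comp hq.continuous
  have hfs : HasCompactSupport f := hsupp.comp_left (g := Complex.ofReal) Complex.ofReal_zero
  have hfi : Integrable f volume := hfc.integrable_of_hasCompactSupport hfs
  have hfsm : ContDiff ℝ (⊤ : ℕ∞) f := Complex.ofRealCLM.contDiff.comp hq
  have hrad : ∀ ξ η : EuclideanSpace ℝ (Fin (n+1)), ‖ξ‖ = ‖η‖ → 𝓕 f ξ = 𝓕 f η := by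
    intro ξ η hne
    obtain ⟨v, hv1, hvξ, hvη⟩ := exists_unit_orth (n+1) hm ξ η
    have hcard : Module.finrank ℝ (EuclideanSpace ℝ (Fin (n+1))) = Fintype.card (Fin (n+1)) := by
      simp
    have horth : Orthonormal ℝ
        (Set.restrict ({0} : Set (Fin (n+1))) (fun _ => v)) := by
      rw [orthonormal_iff_ite]
      intro i j
      have hi : (i : Fin (n+1)) = 0 := i.2
      have hj : (j : Fin (n+1)) = 0 := j.2
      have hij : i = j := Subtype.ext (hi.trans hj.symm)
      subst hij
      simp only [Set.restrict_apply, if_pos rfl]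
      rw [real_inner_self_eq_norm_mul_norm]; change ‖v‖ * ‖v‖ = _; rw [hv1, mul_one]
      norm_num
    obtain ⟨b, hb⟩ := horth.exists_orthonormalBasis_extension_of_card_eq hcard
    have hb0 : b 0 = v := hb 0 rfl
    set R := Submodule.reflection (ℝ ∙ (ξ - η))ᗮ with hRdef
    have hRξ : R ξ = η := Submodule.reflection_sub hne
    have hRv : R v = v := by
      apply Submodule.reflection_mem_subspace_eq_self
      rw [Submodule.mem_orthogonal_singleton_iff_inner_right, inner_sub_left, hvξ, hvη, sub_zero]
    set b' := b.map R with hb'def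
    have hb'0 : b' 0 = v := by rw [OrthonormalBasis.map_apply, hb0, hRv]
    have hξslice := slice9 f hfi b (by rw [hb0]; exact hvξ)
    have hηslice := slice9 f hfi b' (by rw [hb'0]; exact hvη)
    have hlift : ∀ w : Fin n → ℝ, liftW b' w = R (liftW b w) := fun w => rfl
    rw [hξslice, hηslice]
    refine (integral_congr_ae (Filter.Eventually.of_forall fun w => ?_)).symm
    rw [hlift, hb0, hb'0]
    have h1 : ⟪R (liftW b w), η⟫ = ⟪liftW b w, ξ⟫ := by
      conv_lhs => rw [← hRξ]
      exact R.inner_map_map _ _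
    have hperp : ⟪liftW b w, v⟫ = 0 := by rw [← hb0]; exact liftW_inner b w
    have hperp' : ⟪R (liftW b w), v⟫ = 0 := by
      rw [← hRv, R.inner_map_map]; exact hperp
    have h2 : (∫ t : ℝ, f (R (liftW b w) + t • v)) = ∫ t : ℝ, f (liftW b w + t • v) := by
      simp only [hfdef]
      rw [show (∫ t : ℝ, ((q (R (liftW b w) + t • v) : ℝ) : ℂ)) =
          ((∫ t : ℝ, q (R (liftW b w) + t • v) : ℝ) : ℂ) from integral_ofReal,
        show (∫ t : ℝ, ((q (liftW b w + t • v) : ℝ) : ℂ)) =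
          ((∫ t : ℝ, q (liftW b w + t • v) : ℝ) : ℂ) from integral_ofReal]
      exact congrArg _ (hmarg v hv1 _ _ hperp' hperp (R.norm_map _))
    rw [h1, h2]
  obtain ⟨Q, hQ⟩ := schwartz_of_compact f hfsm hfs
  have h𝓕i : Integrable (𝓕 f) volume := by
    have h := (SchwartzMap.fourierTransformCLM ℂ Q).integrable (μ := volume)
    rwa [SchwartzMap.fourierTransformCLM_apply, SchwartzMap.fourier_coe, hQ] at h
  intro x y hxy
  have hinv : ∀ z, 𝓕⁻ (𝓕 f) z = f z := fun z => hfi.fourierInv_fourier_eq h𝓕i hfc.continuousAt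
  set R := Submodule.reflection (ℝ ∙ (x - y))ᗮ with hRdef
  have hcomp : (𝓕 f) ∘ R = 𝓕 f := by
    funext z; exact hrad (R z) z (R.norm_map z)
  have key : f y = f x := by
    calc f y = 𝓕⁻ (𝓕 f) y := (hinv y).symm
      _ = 𝓕⁻ (𝓕 f) (R x) := by rw [Submodule.reflection_sub hxy]
      _ = 𝓕⁻ ((𝓕 f) ∘ R) x := (Real.fourierInv_comp_linearIsometry R (𝓕 f) x).symm
      _ = 𝓕⁻ (𝓕 f) x := by rw [hcomp]
      _ = f x := hinv x
  simp only [hfdef] at key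
  exact (Complex.ofReal_inj.1 key).symm
end

section
/- Let a be a zero-order symbol on ℝⁿ, let ξ₀ ∈ ℝⁿ with ξ₀ ≠ 0, and let f : ℝⁿ → ℂ be infinitely differentiable with compact support. For λ > 0 set u_λ(x) = e^{i λ ⟨x, ξ₀⟩} f(x). Then ∫_{ℝⁿ} |(A u_λ)(x) − a(x, ξ₀) · u_λ(x)|² dx → 0 as λ → ∞ (limit along Filter.atTop in ℝ). -/
open MeasureTheory Filter Complex
open scoped RealInnerProductSpace

noncomputable section

/-- The (unnormalized) Fourier transform `û(ξ) = ∫ e^{−i⟨y,ξ⟩} u(y) dy`. -/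
def ft {n : ℕ} (u : EuclideanSpace ℝ (Fin n) → ℂ) (ξ : EuclideanSpace ℝ (Fin n)) : ℂ :=
  ∫ y, Complex.exp (-Complex.I * (⟪y, ξ⟫ : ℂ)) * u y

/-- The quantization `(A u)(x) = (2π)^{−n} ∫ e^{i⟨x,ξ⟩} a(x,ξ) û(ξ) dξ` of a symbol `a`. -/
def quant {n : ℕ} (a : EuclideanSpace ℝ (Fin n) × EuclideanSpace ℝ (Fin n) → ℂ)
    (u : EuclideanSpace ℝ (Fin n) → ℂ) (x : EuclideanSpace ℝ (Fin n)) : ℂ :=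
  (((2 * Real.pi) ^ n : ℝ) : ℂ)⁻¹ *
    ∫ ξ, Complex.exp (Complex.I * (⟪x, ξ⟫ : ℂ)) * a (x, ξ) * ft u ξ

/-- A zero-order symbol on `ℝⁿ`: smooth away from `ξ = 0`, positively homogeneous of degree
zero in `ξ`, and compactly supported in `x`. -/
def IsZeroOrderSymbol {n : ℕ}
    (a : EuclideanSpace ℝ (Fin n) × EuclideanSpace ℝ (Fin n) → ℂ) : Prop :=
  ContDiffOn ℝ (⊤ : ℕ∞) a {p : EuclideanSpace ℝ (Fin n) × EuclideanSpace ℝ (Fin n) | p.2 ≠ 0} ∧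
  (∀ (x ξ : EuclideanSpace ℝ (Fin n)), ξ ≠ 0 → ∀ c : ℝ, 0 < c → a (x, c • ξ) = a (x, ξ)) ∧
  ∃ K : Set (EuclideanSpace ℝ (Fin n)), IsCompact K ∧
    ∀ (x ξ : EuclideanSpace ℝ (Fin n)), x ∉ K → a (x, ξ) = 0

namespace Stmt6Aux

open scoped FourierTransform Real

variable {n : ℕ}

/-- A smooth compactly supported function as a Schwartz map. -/
def toSchwartz (f : EuclideanSpace ℝ (Fin n) → ℂ) (hf : ContDiff ℝ (⊤ : ℕ∞) f)
    (hf' : HasCompactSupport f) : SchwartzMap (EuclideanSpace ℝ (Fin n)) ℂ where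
  toFun := f
  smooth' := hf.of_le (by simp)
  decay' := by
    intro k m
    have hc : Continuous fun x : EuclideanSpace ℝ (Fin n) =>
        ‖x‖ ^ k * ‖iteratedFDeriv ℝ m f x‖ :=
      (continuous_norm.pow k).mul (hf.continuous_iteratedFDeriv (by exact_mod_cast le_top)).norm
    have hs : HasCompactSupport fun x : EuclideanSpace ℝ (Fin n) =>
        ‖x‖ ^ k * ‖iteratedFDeriv ℝ m f x‖ :=
      (hf'.iteratedFDeriv m).norm.mul_left
    obtain ⟨C, hC⟩ := hc.bounded_above_of_compact_support hs
    exact ⟨C, fun x => by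
      simpa [_root_.abs_of_nonneg, norm_mul, norm_norm, norm_pow] using hC x⟩

variable {f : EuclideanSpace ℝ (Fin n) → ℂ}

lemma ft_eq_fourier (ζ : EuclideanSpace ℝ (Fin n)) :
    ft f ((2 * π) • ζ) = 𝓕 f ζ := by
  rw [Real.fourier_eq']
  unfold ft
  congr 1
  funext y
  rw [smul_eq_mul, real_inner_smul_right]
  congr 1
  push_cast
  ring

lemma ft_eq_fourier' (ξ : EuclideanSpace ℝ (Fin n)) :
    ft f ξ = 𝓕 f ((2 * π)⁻¹ • ξ) := by
  rw [← ft_eq_fourier, smul_smul, mul_inv_cancel₀ (by positivity : (2 * π : ℝ) ≠ 0), one_smul]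

lemma integrable_ft (hf : ContDiff ℝ (⊤ : ℕ∞) f) (hf' : HasCompactSupport f) :
    Integrable (ft f) := by
  have h𝓕 : Integrable (𝓕 f) := by
    have := (SchwartzMap.fourierTransformCLM ℂ (toSchwartz f hf hf')).integrable (μ := volume)
    rw [SchwartzMap.fourierTransformCLM_apply, SchwartzMap.fourier_coe] at this
    exact this
  have := h𝓕.comp_smul (R := (2 * π)⁻¹) (by positivity)
  exact this.congr (by
    filter_upwards with ξ
    rw [ft_eq_fourier'])

/-- Fourier inversion in the unnormalized convention. -/
lemma inversion (hf : ContDiff ℝ (⊤ : ℕ∞) f) (hf' : HasCompactSupport f)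
    (x : EuclideanSpace ℝ (Fin n)) :
    f x = (((2 * π) ^ n : ℝ) : ℂ)⁻¹ *
      ∫ η, Complex.exp (Complex.I * (⟪x, η⟫ : ℂ)) * ft f η := by
  have h𝓕 : Integrable (𝓕 f) := by
    have := (SchwartzMap.fourierTransformCLM ℂ (toSchwartz f hf hf')).integrable (μ := volume)
    rw [SchwartzMap.fourierTransformCLM_apply, SchwartzMap.fourier_coe] at this
    exact this
  have hint : Integrable f := (toSchwartz f hf hf').integrable
  have hinv : 𝓕⁻ (𝓕 f) x = f x := by
    rw [hf.continuous.fourierInv_fourier_eq hint h𝓕]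
  rw [Real.fourierInv_eq'] at hinv
  have hcv : ∫ ζ, Complex.exp (Complex.I * (⟪x, (2*π) • ζ⟫ : ℂ)) * ft f ((2*π) • ζ) =
      |((2*π : ℝ) ^ (Module.finrank ℝ (EuclideanSpace ℝ (Fin n))))⁻¹| •
        ∫ η, Complex.exp (Complex.I * (⟪x, η⟫ : ℂ)) * ft f η :=
    MeasureTheory.Measure.integral_comp_smul volume
      (fun η => Complex.exp (Complex.I * (⟪x, η⟫ : ℂ)) * ft f η) (2*π)
  have heq : ∀ ζ : EuclideanSpace ℝ (Fin n),
      Complex.exp (Complex.I * (⟪x, (2*π) • ζ⟫ : ℂ)) * ft f ((2*π) • ζ)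
        = Complex.exp (((2 * π * ⟪ζ, x⟫ : ℝ) : ℂ) * Complex.I) • 𝓕 f ζ := by
    intro ζ
    rw [ft_eq_fourier, smul_eq_mul, real_inner_smul_right, real_inner_comm]
    congr 2
    push_cast
    ring
  simp_rw [heq] at hcv
  rw [hinv] at hcv
  rw [finrank_euclideanSpace_fin] at hcv
  have h2 : |((2*π : ℝ) ^ n)⁻¹| = ((2*π : ℝ) ^ n)⁻¹ := abs_of_pos (by positivity)
  rw [h2] at hcv
  rw [hcv, Complex.real_smul]
  push_cast
  ring

lemma nontriv (hn : 1 ≤ n) : Nontrivial (EuclideanSpace ℝ (Fin n)) := by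
  haveI : Nonempty (Fin n) := ⟨⟨0, hn⟩⟩
  exact inferInstance

lemma vol_singleton (hn : 1 ≤ n) (v : EuclideanSpace ℝ (Fin n)) :
    (volume : Measure (EuclideanSpace ℝ (Fin n))) {v} = 0 := by
  haveI := nontriv hn
  exact measure_singleton v

/-- a.e. strong measurability of a function continuous off a point. -/
lemma aesm_of_continuousAt_off (hn : 1 ≤ n) {g : EuclideanSpace ℝ (Fin n) → ℂ}
    (v : EuclideanSpace ℝ (Fin n)) (hg : ∀ w, w ≠ v → ContinuousAt g w) :
    AEStronglyMeasurable g (volume : Measure (EuclideanSpace ℝ (Fin n))) := by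
  have hc : ContinuousOn g ({v}ᶜ : Set (EuclideanSpace ℝ (Fin n))) := fun w hw =>
    (hg w hw).continuousWithinAt
  have h1 := hc.aestronglyMeasurable (μ := volume) (isOpen_compl_singleton.measurableSet)
  have h2 : ({v}ᶜ : Set (EuclideanSpace ℝ (Fin n))) =ᵐ[volume] Set.univ := by
    rw [ae_eq_univ, compl_compl]
    exact vol_singleton hn v
  rwa [Measure.restrict_congr_set h2, Measure.restrict_univ] at h1

/-- The symbol is bounded away from ξ = 0. -/
lemma symbol_bound {a : EuclideanSpace ℝ (Fin n) × EuclideanSpace ℝ (Fin n) → ℂ}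
    (hsm : ContDiffOn ℝ (⊤ : ℕ∞) a {p : EuclideanSpace ℝ (Fin n) × EuclideanSpace ℝ (Fin n) | p.2 ≠ 0})
    (hhom : ∀ (x ξ : EuclideanSpace ℝ (Fin n)), ξ ≠ 0 → ∀ c : ℝ, 0 < c → a (x, c • ξ) = a (x, ξ))
    {K : Set (EuclideanSpace ℝ (Fin n))} (hK : IsCompact K)
    (hsupp : ∀ (x ξ : EuclideanSpace ℝ (Fin n)), x ∉ K → a (x, ξ) = 0) :
    ∃ C : ℝ, 0 ≤ C ∧ ∀ (x ξ : EuclideanSpace ℝ (Fin n)), ξ ≠ 0 → ‖a (x, ξ)‖ ≤ C := by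
  have hS : IsCompact (K ×ˢ Metric.sphere (0 : EuclideanSpace ℝ (Fin n)) 1) :=
    hK.prod (isCompact_sphere 0 1)
  have hsub : K ×ˢ Metric.sphere (0 : EuclideanSpace ℝ (Fin n)) 1 ⊆
      {p : EuclideanSpace ℝ (Fin n) × EuclideanSpace ℝ (Fin n) | p.2 ≠ 0} := by
    rintro ⟨x, ξ⟩ ⟨-, hξ⟩
    simp only [Metric.mem_sphere, dist_zero_right] at hξ
    intro h0
    rw [show ((x, ξ).2 : EuclideanSpace ℝ (Fin n)) = ξ from rfl] at h0
    rw [h0] at hξ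
    simp at hξ
  have hcont : ContinuousOn a (K ×ˢ Metric.sphere (0 : EuclideanSpace ℝ (Fin n)) 1) :=
    (hsm.continuousOn).mono hsub
  obtain ⟨C, hC⟩ := hS.exists_bound_of_continuousOn hcont
  refine ⟨max C 0, le_max_right _ _, fun x ξ hξ => ?_⟩
  by_cases hx : x ∈ K
  · have hnorm : ‖ξ‖ ≠ 0 := norm_ne_zero_iff.2 hξ
    have hmem : (x, ‖ξ‖⁻¹ • ξ) ∈ K ×ˢ Metric.sphere (0 : EuclideanSpace ℝ (Fin n)) 1 := by
      refine ⟨hx, ?_⟩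
      simp [norm_smul, _root_.abs_of_nonneg (inv_nonneg.2 (norm_nonneg ξ)),
        inv_mul_cancel₀ hnorm]
    have := hhom x ξ hξ (‖ξ‖⁻¹) (by positivity)
    calc ‖a (x, ξ)‖ = ‖a (x, ‖ξ‖⁻¹ • ξ)‖ := by rw [this]
      _ ≤ C := hC _ hmem
      _ ≤ max C 0 := le_max_left _ _
  · simp [hsupp x ξ hx, le_max_right]

/-- Continuity in x of the symbol for fixed nonzero ξ. -/
lemma symbol_cont_x {a : EuclideanSpace ℝ (Fin n) × EuclideanSpace ℝ (Fin n) → ℂ}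
    (hsm : ContDiffOn ℝ (⊤ : ℕ∞) a {p : EuclideanSpace ℝ (Fin n) × EuclideanSpace ℝ (Fin n) | p.2 ≠ 0})
    {w : EuclideanSpace ℝ (Fin n)} (hw : w ≠ 0) :
    Continuous fun x : EuclideanSpace ℝ (Fin n) => a (x, w) := by
  have hopen : IsOpen {p : EuclideanSpace ℝ (Fin n) × EuclideanSpace ℝ (Fin n) | p.2 ≠ 0} :=
    isOpen_compl_singleton.preimage continuous_snd
  rw [continuous_iff_continuousAt]
  intro x
  have h1 : ContinuousAt a (x, w) :=
    hsm.continuousOn.continuousAt (hopen.mem_nhds (by simpa using hw))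
  have h2 : ContinuousAt (fun x' : EuclideanSpace ℝ (Fin n) => (x', w)) x :=
    (continuous_id.prodMk continuous_const).continuousAt
  exact Filter.Tendsto.comp h1 h2

/-- Continuity in ξ of the symbol at a fixed nonzero point, for fixed x. -/
lemma symbol_cont_xi {a : EuclideanSpace ℝ (Fin n) × EuclideanSpace ℝ (Fin n) → ℂ}
    (hsm : ContDiffOn ℝ (⊤ : ℕ∞) a {p : EuclideanSpace ℝ (Fin n) × EuclideanSpace ℝ (Fin n) | p.2 ≠ 0})
    (x : EuclideanSpace ℝ (Fin n)) {w : EuclideanSpace ℝ (Fin n)} (hw : w ≠ 0) :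
    ContinuousAt (fun ζ : EuclideanSpace ℝ (Fin n) => a (x, ζ)) w := by
  have hopen : IsOpen {p : EuclideanSpace ℝ (Fin n) × EuclideanSpace ℝ (Fin n) | p.2 ≠ 0} :=
    isOpen_compl_singleton.preimage continuous_snd
  have h1 : ContinuousAt a (x, w) :=
    hsm.continuousOn.continuousAt (hopen.mem_nhds (by simpa using hw))
  have h2 : ContinuousAt (fun ζ : EuclideanSpace ℝ (Fin n) => (x, ζ)) w :=
    (continuous_const.prodMk continuous_id).continuousAt
  exact Filter.Tendsto.comp h1 h2

/-- Convergence of the symbol along η + λ ξ₀ as λ → ∞. -/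
lemma symbol_tendsto {a : EuclideanSpace ℝ (Fin n) × EuclideanSpace ℝ (Fin n) → ℂ}
    (hsm : ContDiffOn ℝ (⊤ : ℕ∞) a {p : EuclideanSpace ℝ (Fin n) × EuclideanSpace ℝ (Fin n) | p.2 ≠ 0})
    (hhom : ∀ (x ξ : EuclideanSpace ℝ (Fin n)), ξ ≠ 0 → ∀ c : ℝ, 0 < c → a (x, c • ξ) = a (x, ξ))
    {ξ₀ : EuclideanSpace ℝ (Fin n)} (hξ₀ : ξ₀ ≠ 0)
    (x η : EuclideanSpace ℝ (Fin n)) :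
    Tendsto (fun lam : ℝ => a (x, η + lam • ξ₀)) atTop (nhds (a (x, ξ₀))) := by
  have hlim : Tendsto (fun lam : ℝ => lam⁻¹ • η + ξ₀) atTop (nhds ξ₀) := by
    have : Tendsto (fun lam : ℝ => lam⁻¹ • η) atTop (nhds ((0:ℝ) • η)) :=
      tendsto_inv_atTop_zero.smul_const η
    simpa using this.add_const ξ₀
  have h1 : Tendsto (fun lam : ℝ => a (x, lam⁻¹ • η + ξ₀)) atTop (nhds (a (x, ξ₀))) :=
    (symbol_cont_xi hsm x hξ₀).tendsto.comp hlim
  apply h1.congr'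
  have hev : ∀ᶠ lam : ℝ in atTop, ‖η‖ / ‖ξ₀‖ < lam ∧ 0 < lam :=
    (eventually_gt_atTop _).and (eventually_gt_atTop 0)
  filter_upwards [hev] with lam ⟨h1', h2'⟩
  have hξ₀n : 0 < ‖ξ₀‖ := norm_pos_iff.2 hξ₀
  have hne : η + lam • ξ₀ ≠ 0 := by
    intro h0
    have : ‖η‖ = lam * ‖ξ₀‖ := by
      have : η = -(lam • ξ₀) := by linear_combination (norm := module) h0
      rw [this, norm_neg, norm_smul, Real.norm_eq_abs, abs_of_pos h2']
    rw [div_lt_iff₀ hξ₀n] at h1'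
    linarith
  have := hhom x (η + lam • ξ₀) hne (lam⁻¹) (by positivity)
  rw [← this]
  congr 1
  rw [smul_add, smul_smul, inv_mul_cancel₀ (ne_of_gt h2'), one_smul]

lemma norm_exp_I_mul_real (r : ℝ) : ‖Complex.exp (Complex.I * (r : ℂ))‖ = 1 := by
  rw [Complex.norm_exp]
  simp

end Stmt6Aux

open Stmt6Aux

theorem stmt6 (n : ℕ) (hn : 1 ≤ n)
    (a : EuclideanSpace ℝ (Fin n) × EuclideanSpace ℝ (Fin n) → ℂ)
    (ha : IsZeroOrderSymbol a)
    (ξ₀ : EuclideanSpace ℝ (Fin n)) (hξ₀ : ξ₀ ≠ 0)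
    (f : EuclideanSpace ℝ (Fin n) → ℂ) (hf : ContDiff ℝ (⊤ : ℕ∞) f) (hf' : HasCompactSupport f)
    (u : ℝ → EuclideanSpace ℝ (Fin n) → ℂ)
    (hu : ∀ (lam : ℝ) (x : EuclideanSpace ℝ (Fin n)),
      u lam x = Complex.exp (Complex.I * lam * (⟪x, ξ₀⟫ : ℂ)) * f x) :
    Tendsto (fun lam : ℝ => ∫ x, ‖quant a (u lam) x - a (x, ξ₀) * u lam x‖ ^ 2)
      atTop (nhds 0) := by
  obtain ⟨hsm, hhom, K, hK, hsupp⟩ := ha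
  obtain ⟨C, hC0, hC⟩ := symbol_bound hsm hhom hK hsupp
  set c : ℂ := (((2 * Real.pi) ^ n : ℝ) : ℂ)⁻¹ with hc_def
  have hftint : Integrable (ft f) := integrable_ft hf hf'
  -- the key kernel
  set Φ : ℝ → EuclideanSpace ℝ (Fin n) → EuclideanSpace ℝ (Fin n) → ℂ :=
    fun lam x η => Complex.exp (Complex.I * (⟪x, η + lam • ξ₀⟫ : ℂ)) *
      ((a (x, η + lam • ξ₀) - a (x, ξ₀)) * ft f η) with hΦ_def
  -- translation of the Fourier transform of u lam
  have hftu : ∀ (lam : ℝ) (ξ : EuclideanSpace ℝ (Fin n)),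
      ft (u lam) ξ = ft f (ξ - lam • ξ₀) := by
    intro lam ξ
    unfold ft
    refine integral_congr_ae (Filter.Eventually.of_forall fun y => ?_)
    simp only []
    rw [hu, ← mul_assoc, ← Complex.exp_add]
    congr 2
    rw [inner_sub_right, real_inner_smul_right]
    push_cast
    ring
  -- a.e. bound and measurability of Φ
  have haebound : ∀ (lam : ℝ) (x : EuclideanSpace ℝ (Fin n)),
      ∀ᵐ η : EuclideanSpace ℝ (Fin n),
        ‖Φ lam x η‖ ≤ 2 * C * ‖ft f η‖ := by
    intro lam x
    have hnull : (volume : Measure (EuclideanSpace ℝ (Fin n))) {-(lam • ξ₀)} = 0 :=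
      vol_singleton hn _
    filter_upwards [measure_eq_zero_iff_ae_notMem.1 hnull] with η hη
    have hne : η + lam • ξ₀ ≠ 0 := by
      intro h0
      apply hη
      simp only [Set.mem_singleton_iff]
      linear_combination (norm := module) h0
    rw [hΦ_def]
    simp only [norm_mul, norm_exp_I_mul_real, one_mul]
    have h1 : ‖a (x, η + lam • ξ₀) - a (x, ξ₀)‖ ≤ 2 * C := by
      calc ‖a (x, η + lam • ξ₀) - a (x, ξ₀)‖
          ≤ ‖a (x, η + lam • ξ₀)‖ + ‖a (x, ξ₀)‖ := norm_sub_le _ _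
        _ ≤ C + C := add_le_add (hC x _ hne) (hC x _ hξ₀)
        _ = 2 * C := by ring
    exact mul_le_mul_of_nonneg_right h1 (norm_nonneg _)
  have hmeasΦ : ∀ (lam : ℝ) (x : EuclideanSpace ℝ (Fin n)),
      AEStronglyMeasurable (Φ lam x) volume := by
    intro lam x
    have hexp : Continuous fun η : EuclideanSpace ℝ (Fin n) =>
        Complex.exp (Complex.I * (⟪x, η + lam • ξ₀⟫ : ℂ)) := by
      apply Complex.continuous_exp.comp
      exact continuous_const.mul (Complex.continuous_ofReal.comp
        (continuous_const.inner (continuous_id.add continuous_const)))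
    have ha1 : AEStronglyMeasurable
        (fun η : EuclideanSpace ℝ (Fin n) => a (x, η + lam • ξ₀)) volume := by
      apply aesm_of_continuousAt_off hn (-(lam • ξ₀))
      intro w hw
      have hwne : w + lam • ξ₀ ≠ 0 := by
        intro h0
        apply hw
        linear_combination (norm := module) h0
      have h1 : ContinuousAt (fun ζ : EuclideanSpace ℝ (Fin n) => a (x, ζ)) (w + lam • ξ₀) :=
        symbol_cont_xi hsm x hwne
      have h2 : ContinuousAt (fun η : EuclideanSpace ℝ (Fin n) => η + lam • ξ₀) w :=
        (continuous_id.add continuous_const).continuousAt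
      exact ContinuousAt.comp (g := fun ζ : EuclideanSpace ℝ (Fin n) => a (x, ζ))
        (f := fun η : EuclideanSpace ℝ (Fin n) => η + lam • ξ₀) h1 h2
    exact hexp.aestronglyMeasurable.mul
      ((ha1.sub aestronglyMeasurable_const).mul hftint.aestronglyMeasurable)
  have hboundint : Integrable (fun η : EuclideanSpace ℝ (Fin n) => 2 * C * ‖ft f η‖) :=
    hftint.norm.const_mul _
  have hΦint : ∀ (lam : ℝ) (x : EuclideanSpace ℝ (Fin n)), Integrable (Φ lam x) := by
    intro lam x
    exact hboundint.mono' (hmeasΦ lam x) (haebound lam x)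
  -- the key identity
  have hkey : ∀ (lam : ℝ) (x : EuclideanSpace ℝ (Fin n)),
      quant a (u lam) x - a (x, ξ₀) * u lam x = c * ∫ η, Φ lam x η := by
    intro lam x
    -- the two integrands
    set A : EuclideanSpace ℝ (Fin n) → ℂ := fun η =>
      Complex.exp (Complex.I * (⟪x, η + lam • ξ₀⟫ : ℂ)) * (a (x, η + lam • ξ₀) * ft f η)
      with hA_def
    set B : EuclideanSpace ℝ (Fin n) → ℂ := fun η =>
      Complex.exp (Complex.I * (⟪x, η + lam • ξ₀⟫ : ℂ)) * (a (x, ξ₀) * ft f η) with hB_def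
    have hmeasexp : AEStronglyMeasurable (fun η : EuclideanSpace ℝ (Fin n) =>
        Complex.exp (Complex.I * (⟪x, η + lam • ξ₀⟫ : ℂ))) volume := by
      apply Continuous.aestronglyMeasurable
      apply Complex.continuous_exp.comp
      exact continuous_const.mul (Complex.continuous_ofReal.comp
        (continuous_const.inner (continuous_id.add continuous_const)))
    have hAbound : ∀ᵐ η : EuclideanSpace ℝ (Fin n), ‖A η‖ ≤ C * ‖ft f η‖ := by
      have hnull : (volume : Measure (EuclideanSpace ℝ (Fin n))) {-(lam • ξ₀)} = 0 :=
        vol_singleton hn _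
      filter_upwards [measure_eq_zero_iff_ae_notMem.1 hnull] with η hη
      have hne : η + lam • ξ₀ ≠ 0 := by
        intro h0; apply hη; simp only [Set.mem_singleton_iff]
        linear_combination (norm := module) h0
      rw [hA_def]
      simp only [norm_mul, norm_exp_I_mul_real, one_mul]
      exact mul_le_mul_of_nonneg_right (hC x _ hne) (norm_nonneg _)
    have hmeasA : AEStronglyMeasurable A volume := by
      have ha1 : AEStronglyMeasurable
          (fun η : EuclideanSpace ℝ (Fin n) => a (x, η + lam • ξ₀)) volume := by
        apply aesm_of_continuousAt_off hn (-(lam • ξ₀))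
        intro w hw
        have hwne : w + lam • ξ₀ ≠ 0 := by
          intro h0; apply hw; linear_combination (norm := module) h0
        exact ContinuousAt.comp (g := fun ζ : EuclideanSpace ℝ (Fin n) => a (x, ζ))
          (f := fun η : EuclideanSpace ℝ (Fin n) => η + lam • ξ₀) (symbol_cont_xi hsm x hwne)
          ((continuous_id.add continuous_const).continuousAt)
      exact hmeasexp.mul (ha1.mul hftint.aestronglyMeasurable)
    have hintA : Integrable A := ((hftint.norm.const_mul C).mono' hmeasA hAbound)
    have hmeasB : AEStronglyMeasurable B volume :=
      hmeasexp.mul (aestronglyMeasurable_const.mul hftint.aestronglyMeasurable)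
    have hintB : Integrable B := by
      refine (hftint.norm.const_mul ‖a (x, ξ₀)‖).mono' hmeasB ?_
      filter_upwards with η
      rw [hB_def]
      simp only [norm_mul, norm_exp_I_mul_real, one_mul]
      exact le_refl _
    -- quant in terms of A
    have hquant : quant a (u lam) x = c * ∫ η, A η := by
      rw [quant]
      congr 1
      have hstep1 : ∀ ξ : EuclideanSpace ℝ (Fin n),
          Complex.exp (Complex.I * (⟪x, ξ⟫ : ℂ)) * a (x, ξ) * ft (u lam) ξ =
          Complex.exp (Complex.I * (⟪x, ξ⟫ : ℂ)) * a (x, ξ) * ft f (ξ - lam • ξ₀) := by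
        intro ξ; rw [hftu]
      rw [integral_congr_ae (Filter.Eventually.of_forall hstep1)]
      have := MeasureTheory.integral_add_right_eq_self (μ := volume)
        (fun ξ : EuclideanSpace ℝ (Fin n) =>
          Complex.exp (Complex.I * (⟪x, ξ⟫ : ℂ)) * a (x, ξ) * ft f (ξ - lam • ξ₀))
        (lam • ξ₀)
      rw [← this]
      refine integral_congr_ae (Filter.Eventually.of_forall fun η => ?_)
      simp only [add_sub_cancel_right, hA_def]
      ring
    -- a(x,ξ₀) * u lam x in terms of B
    have hau : a (x, ξ₀) * u lam x = c * ∫ η, B η := by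
      rw [hu, inversion hf hf' x]
      rw [← hc_def]
      have hrw : ∀ η : EuclideanSpace ℝ (Fin n),
          a (x, ξ₀) * Complex.exp (Complex.I * lam * (⟪x, ξ₀⟫ : ℂ)) *
            (Complex.exp (Complex.I * (⟪x, η⟫ : ℂ)) * ft f η) = B η := by
        intro η
        rw [hB_def]
        simp only []
        rw [show Complex.exp (Complex.I * (⟪x, η + lam • ξ₀⟫ : ℂ)) =
            Complex.exp (Complex.I * lam * (⟪x, ξ₀⟫ : ℂ)) *
              Complex.exp (Complex.I * (⟪x, η⟫ : ℂ)) by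
          rw [← Complex.exp_add]
          congr 1
          rw [inner_add_right, real_inner_smul_right]
          push_cast
          ring]
        ring
      have hBint : ∫ η, B η = (a (x, ξ₀) * Complex.exp (Complex.I * lam * (⟪x, ξ₀⟫ : ℂ))) *
          ∫ η, Complex.exp (Complex.I * (⟪x, η⟫ : ℂ)) * ft f η := by
        rw [← MeasureTheory.integral_const_mul]
        refine integral_congr_ae (Filter.Eventually.of_forall fun η => ?_)
        exact (hrw η).symm
      rw [hBint]
      ring
    rw [hquant, hau, ← mul_sub, ← MeasureTheory.integral_sub hintA hintB]
    congr 1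
    refine integral_congr_ae (Filter.Eventually.of_forall fun η => ?_)
    rw [hΦ_def, hA_def, hB_def]
    simp only []
    ring
  -- vanishing off K
  have hzero : ∀ (lam : ℝ) (x : EuclideanSpace ℝ (Fin n)), x ∉ K →
      quant a (u lam) x - a (x, ξ₀) * u lam x = 0 := by
    intro lam x hx
    have h1 : quant a (u lam) x = 0 := by
      rw [quant]
      have : ∀ ξ : EuclideanSpace ℝ (Fin n),
          Complex.exp (Complex.I * (⟪x, ξ⟫ : ℂ)) * a (x, ξ) * ft (u lam) ξ = 0 := by
        intro ξ; rw [hsupp x ξ hx]; ring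
      rw [integral_congr_ae (Filter.Eventually.of_forall this), integral_zero, mul_zero]
    rw [h1, hsupp x ξ₀ hx, zero_mul, zero_sub, neg_zero]
  -- uniform bound
  set M : ℝ := ‖c‖ * ∫ η, 2 * C * ‖ft f η‖ with hM_def
  have hM0 : 0 ≤ M := by
    apply mul_nonneg (norm_nonneg _)
    apply integral_nonneg
    intro η
    positivity
  have hMbound : ∀ (lam : ℝ) (x : EuclideanSpace ℝ (Fin n)),
      ‖quant a (u lam) x - a (x, ξ₀) * u lam x‖ ≤ M := by
    intro lam x
    rw [hkey lam x, norm_mul, hM_def]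
    apply mul_le_mul_of_nonneg_left _ (norm_nonneg c)
    calc ‖∫ η, Φ lam x η‖ ≤ ∫ η, ‖Φ lam x η‖ := norm_integral_le_integral_norm _
      _ ≤ ∫ η, 2 * C * ‖ft f η‖ :=
          integral_mono_ae (hΦint lam x).norm hboundint (haebound lam x)
  -- continuity in x
  have hcontD : ∀ lam : ℝ,
      Continuous fun x => quant a (u lam) x - a (x, ξ₀) * u lam x := by
    intro lam
    have : (fun x => quant a (u lam) x - a (x, ξ₀) * u lam x) =
        fun x => c * ∫ η, Φ lam x η := by
      funext x; exact hkey lam x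
    rw [this]
    apply continuous_const.mul
    apply continuous_of_dominated (bound := fun η => 2 * C * ‖ft f η‖)
      (fun x => hmeasΦ lam x) (fun x => haebound lam x) hboundint
    have hnull : (volume : Measure (EuclideanSpace ℝ (Fin n))) {-(lam • ξ₀)} = 0 :=
      vol_singleton hn _
    filter_upwards [measure_eq_zero_iff_ae_notMem.1 hnull] with η hη
    have hne : η + lam • ξ₀ ≠ 0 := by
      intro h0; apply hη; simp only [Set.mem_singleton_iff]
      linear_combination (norm := module) h0
    rw [hΦ_def]
    simp only []
    apply Continuous.mul
    · apply Complex.continuous_exp.comp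
      exact continuous_const.mul (Complex.continuous_ofReal.comp
        ((continuous_id.inner continuous_const)))
    · exact ((symbol_cont_x hsm hne).sub (symbol_cont_x hsm hξ₀)).mul continuous_const
  -- pointwise convergence
  have hpt : ∀ x : EuclideanSpace ℝ (Fin n),
      Tendsto (fun lam : ℝ => quant a (u lam) x - a (x, ξ₀) * u lam x) atTop (nhds 0) := by
    intro x
    have heq : (fun lam : ℝ => quant a (u lam) x - a (x, ξ₀) * u lam x) =
        fun lam : ℝ => c * ∫ η, Φ lam x η := by
      funext lam; exact hkey lam x
    rw [heq]
    have hinner : Tendsto (fun lam : ℝ => ∫ η, Φ lam x η) atTop (nhds 0) := by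
      have h0 : (0 : ℂ) = ∫ _ : EuclideanSpace ℝ (Fin n), (0 : ℂ) := by
        rw [integral_zero]
      rw [h0]
      apply tendsto_integral_filter_of_dominated_convergence
        (bound := fun η => 2 * C * ‖ft f η‖)
        (Filter.Eventually.of_forall fun lam => hmeasΦ lam x)
        (Filter.Eventually.of_forall fun lam => haebound lam x) hboundint
      filter_upwards with η
      have h1 : Tendsto (fun lam : ℝ => a (x, η + lam • ξ₀) - a (x, ξ₀)) atTop
          (nhds (a (x, ξ₀) - a (x, ξ₀))) :=
        (symbol_tendsto hsm hhom hξ₀ x η).sub tendsto_const_nhds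
      have hg : Tendsto (fun lam : ℝ =>
          ‖a (x, η + lam • ξ₀) - a (x, ξ₀)‖ * ‖ft f η‖) atTop (nhds 0) := by
        simpa using (h1.norm).mul_const ‖ft f η‖
      refine squeeze_zero_norm (fun lam => le_of_eq ?_) hg
      rw [hΦ_def]
      simp only [norm_mul, norm_exp_I_mul_real, one_mul]
    have := hinner.const_mul c
    simpa using this
  -- conclude by dominated convergence in x
  have hfinal : Tendsto (fun lam : ℝ =>
      ∫ x, ‖quant a (u lam) x - a (x, ξ₀) * u lam x‖ ^ 2) atTop
      (nhds (∫ _ : EuclideanSpace ℝ (Fin n), (0 : ℝ))) := by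
    apply tendsto_integral_filter_of_dominated_convergence
      (bound := K.indicator fun _ => M ^ 2)
    · filter_upwards with lam
      exact (((hcontD lam).norm.pow 2)).aestronglyMeasurable
    · filter_upwards with lam
      filter_upwards with x
      rw [Real.norm_eq_abs, _root_.abs_of_nonneg (by positivity)]
      by_cases hx : x ∈ K
      · rw [Set.indicator_of_mem hx]
        exact pow_le_pow_left₀ (norm_nonneg _) (hMbound lam x) 2
      · rw [Set.indicator_of_notMem hx, hzero lam x hx]
        simp
    · exact (integrableOn_const hK.measure_lt_top.ne).integrable_indicator
        hK.isClosed.measurableSet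
    · filter_upwards with x
      have := ((hpt x).norm).pow 2
      simpa using this
  simpa using hfinal
end
end

section
/- Let a be a zero-order symbol on ℝⁿ, let ξ₀ ∈ ℝⁿ with ξ₀ ≠ 0, and let f : ℝⁿ → ℂ be infinitely differentiable with compact support, with Fourier transform f̂(ξ) = ∫ e^{−i⟨y,ξ⟩} f(y) dy. Then for every ε > 0 there exists L > 0 such that for all λ > L and all x ∈ ℝⁿ, ∫_{ℝⁿ} |a(x, ξ/λ + ξ₀) − a(x, ξ₀)| · |f̂(ξ)| dξ < ε. -/
open MeasureTheory Filter Complex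
open scoped RealInnerProductSpace

set_option maxHeartbeats 1000000
noncomputable section

open FourierTransform Real
open scoped SchwartzMap

lemma ft_integrable {n : ℕ} (f : EuclideanSpace ℝ (Fin n) → ℂ)
    (hf : ContDiff ℝ (⊤ : ℕ∞) f) (hf' : HasCompactSupport f) :
    Integrable (ft f) := by
  have hdecay : ∀ k m : ℕ, ∃ C : ℝ, ∀ x, ‖x‖ ^ k * ‖iteratedFDeriv ℝ m f x‖ ≤ C := by
    intro k m
    have hcs : HasCompactSupport (fun x => ‖x‖ ^ k * ‖iteratedFDeriv ℝ m f x‖) :=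
      HasCompactSupport.mul_left ((hf'.iteratedFDeriv m).norm)
    have hcont : Continuous (fun x => ‖x‖ ^ k * ‖iteratedFDeriv ℝ m f x‖) := by
      have := hf.continuous_iteratedFDeriv ((by exact_mod_cast le_top) : (m : WithTop ℕ∞) ≤ ((⊤ : ℕ∞) : WithTop ℕ∞))
      fun_prop
    obtain ⟨C, hC⟩ := hcs.exists_bound_of_continuous hcont
    exact ⟨C, fun x => (le_abs_self _).trans (by rw [← Real.norm_eq_abs]; exact hC x)⟩
  let F : 𝓢(EuclideanSpace ℝ (Fin n), ℂ) := ⟨f, hf.of_le (by simp), hdecay⟩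
  have h1 : Integrable (𝓕 (⇑F)) := (SchwartzMap.fourierTransformCLM ℂ F).integrable
  have h2 : ft f = fun ξ => 𝓕 (⇑F) ((2 * π)⁻¹ • ξ) := by
    funext ξ
    rw [Real.fourier_eq']
    unfold ft
    congr 1
    funext v
    have h3 : ⟪v, (2 * π)⁻¹ • ξ⟫ = (2 * π)⁻¹ * ⟪v, ξ⟫ := real_inner_smul_right v ξ _
    rw [h3]
    have hπ : (2 * π) ≠ 0 := by positivity
    have h4 : (-2 : ℝ) * π * ((2 * π)⁻¹ * ⟪v, ξ⟫) = -⟪v, ξ⟫ := by field_simp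
    rw [h4]
    show _ = Complex.exp _ • F.toFun v
    simp only [smul_eq_mul]
    push_cast
    ring_nf
    rfl
  rw [h2]
  exact h1.comp_smul (inv_ne_zero (by positivity))

theorem stmt8 (n : ℕ) (hn : 1 ≤ n)
    (a : EuclideanSpace ℝ (Fin n) × EuclideanSpace ℝ (Fin n) → ℂ)
    (ha : IsZeroOrderSymbol a)
    (ξ₀ : EuclideanSpace ℝ (Fin n)) (hξ₀ : ξ₀ ≠ 0)
    (f : EuclideanSpace ℝ (Fin n) → ℂ) (hf : ContDiff ℝ (⊤ : ℕ∞) f) (hf' : HasCompactSupport f) :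
    ∀ ε : ℝ, 0 < ε → ∃ L : ℝ, 0 < L ∧ ∀ lam : ℝ, L < lam →
      ∀ x : EuclideanSpace ℝ (Fin n),
        (∫ ξ, ‖a (x, lam⁻¹ • ξ + ξ₀) - a (x, ξ₀)‖ * ‖ft f ξ‖) < ε := by
  obtain ⟨hsm, hhom, K, hK, hKa⟩ := ha
  intro ε hε
  have hInt : Integrable (fun ξ : EuclideanSpace ℝ (Fin n) => ‖ft f ξ‖) :=
    (ft_integrable f hf hf').norm
  set G : ℝ := ∫ ξ : EuclideanSpace ℝ (Fin n), ‖ft f ξ‖ with hGdef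
  have hG0 : 0 ≤ G := integral_nonneg fun ξ => norm_nonneg _
  have hξ₀n : 0 < ‖ξ₀‖ := norm_pos_iff.2 hξ₀
  set r : ℝ := ‖ξ₀‖ / 2 with hrdef
  have hr0 : 0 < r := by positivity
  -- global bound on the unit sphere
  have hconta : ContinuousOn a {p : EuclideanSpace ℝ (Fin n) × EuclideanSpace ℝ (Fin n) | p.2 ≠ 0} :=
    hsm.continuousOn
  have hScpt : IsCompact (K ×ˢ Metric.sphere (0 : EuclideanSpace ℝ (Fin n)) 1) :=
    hK.prod (isCompact_sphere _ _)
  have hSsub : (K ×ˢ Metric.sphere (0 : EuclideanSpace ℝ (Fin n)) 1) ⊆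
      {p : EuclideanSpace ℝ (Fin n) × EuclideanSpace ℝ (Fin n) | p.2 ≠ 0} := by
    rintro ⟨x, ξ⟩ ⟨-, hξ⟩
    simp only [Metric.mem_sphere, dist_zero_right] at hξ
    intro h
    simp only [Set.mem_setOf_eq] at h
    rw [h] at hξ
    simp at hξ
  obtain ⟨M₀, hM₀⟩ := hScpt.exists_bound_of_continuousOn (hconta.mono hSsub)
  set M : ℝ := max M₀ 0 with hMdef
  have hM0 : 0 ≤ M := le_max_right _ _
  have hMb : ∀ x ∈ K, ∀ η : EuclideanSpace ℝ (Fin n), η ≠ 0 → ‖a (x, η)‖ ≤ M := by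
    intro x hx η hη
    have hηn : 0 < ‖η‖ := norm_pos_iff.2 hη
    have h1 : a (x, ‖η‖⁻¹ • η) = a (x, η) := hhom x η hη _ (by positivity)
    have h2 : (x, ‖η‖⁻¹ • η) ∈ K ×ˢ Metric.sphere (0 : EuclideanSpace ℝ (Fin n)) 1 := by
      refine ⟨hx, ?_⟩
      simp [norm_smul, abs_of_pos (inv_pos.2 hηn), inv_mul_cancel₀ hηn.ne']
    calc ‖a (x, η)‖ = ‖a (x, ‖η‖⁻¹ • η)‖ := by rw [h1]
      _ ≤ M₀ := hM₀ _ h2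
      _ ≤ M := le_max_left _ _
  -- uniform continuity near ξ₀
  set C : Set (EuclideanSpace ℝ (Fin n) × EuclideanSpace ℝ (Fin n)) :=
    K ×ˢ Metric.closedBall ξ₀ r with hCdef
  have hCcpt : IsCompact C := hK.prod (isCompact_closedBall _ _)
  have hCsub : C ⊆ {p : EuclideanSpace ℝ (Fin n) × EuclideanSpace ℝ (Fin n) | p.2 ≠ 0} := by
    rintro ⟨x, η⟩ ⟨-, hη⟩
    simp only [Metric.mem_closedBall] at hη
    intro h
    simp only [Set.mem_setOf_eq] at h
    rw [h, dist_zero_left] at hη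
    rw [hrdef] at hη
    linarith
  have hUC : UniformContinuousOn a C :=
    hCcpt.uniformContinuousOn_of_continuous (hconta.mono hCsub)
  have hε' : 0 < ε / (2 * (G + 1)) := by positivity
  obtain ⟨δ₀, hδ₀, hδspec⟩ := (Metric.uniformContinuousOn_iff).1 hUC _ hε'
  set δ : ℝ := min δ₀ r with hδdef
  have hδ0 : 0 < δ := lt_min hδ₀ hr0
  -- tail estimate
  have hτ : 0 < ε / (4 * (M + 1)) := by positivity
  have htail : ∃ R : ℝ, 0 ≤ R ∧
      (∫ ξ in (Metric.closedBall (0 : EuclideanSpace ℝ (Fin n)) R)ᶜ, ‖ft f ξ‖) <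
        ε / (4 * (M + 1)) := by
    have hmono : Monotone (fun i : ℕ => Metric.closedBall (0 : EuclideanSpace ℝ (Fin n)) i) := by
      intro i j hij
      exact Metric.closedBall_subset_closedBall (by exact_mod_cast hij)
    have hunion : ⋃ i : ℕ, Metric.closedBall (0 : EuclideanSpace ℝ (Fin n)) i = Set.univ := by
      ext ξ
      simp only [Set.mem_iUnion, Metric.mem_closedBall, dist_zero_right, Set.mem_univ, iff_true]
      exact exists_nat_ge ‖ξ‖
    have hT := MeasureTheory.tendsto_setIntegral_of_monotone
      (fun i => measurableSet_closedBall) hmono (by rw [hunion]; exact hInt.integrableOn)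
    rw [hunion, Measure.restrict_univ] at hT
    have hlim : Tendsto (fun i : ℕ => |(∫ ξ in Metric.closedBall (0 : EuclideanSpace ℝ (Fin n)) i,
        ‖ft f ξ‖) - G|) atTop (nhds 0) := by
      have h2 := (hT.sub_const G).abs
      rw [show |(∫ ξ : EuclideanSpace ℝ (Fin n), ‖ft f ξ‖) - G| = 0 from by
        rw [← hGdef, sub_self, abs_zero]] at h2
      exact h2
    have hev := (hlim.eventually (eventually_lt_nhds hτ))
    obtain ⟨i, hi⟩ := hev.exists
    refine ⟨(i : ℝ), Nat.cast_nonneg i, ?_⟩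
    have hsplit := MeasureTheory.integral_add_compl
      (measurableSet_closedBall (x := (0 : EuclideanSpace ℝ (Fin n))) (ε := (i : ℝ))) hInt
    have : (∫ ξ in (Metric.closedBall (0 : EuclideanSpace ℝ (Fin n)) (i : ℝ))ᶜ, ‖ft f ξ‖)
        = G - ∫ ξ in Metric.closedBall (0 : EuclideanSpace ℝ (Fin n)) (i : ℝ), ‖ft f ξ‖ := by
      rw [hGdef, ← hsplit]; ring
    rw [this]
    calc G - ∫ ξ in Metric.closedBall (0 : EuclideanSpace ℝ (Fin n)) (i : ℝ), ‖ft f ξ‖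
        ≤ |(∫ ξ in Metric.closedBall (0 : EuclideanSpace ℝ (Fin n)) (i : ℝ), ‖ft f ξ‖) - G| := by
          rw [abs_sub_comm]; exact le_abs_self _
      _ < ε / (4 * (M + 1)) := hi
  obtain ⟨R, hR0, hRtail⟩ := htail
  refine ⟨(R + 1) / δ, by positivity, fun lam hlam x => ?_⟩
  have hL0 : 0 < (R + 1) / δ := by positivity
  have hlam0 : 0 < lam := lt_trans hL0 hlam
  by_cases hx : x ∈ K
  · -- main case
    set B : Set (EuclideanSpace ℝ (Fin n)) := Metric.closedBall 0 R with hBdef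
    set φ : EuclideanSpace ℝ (Fin n) → ℝ := fun ξ =>
      B.indicator (fun ξ => ε / (2 * (G + 1)) * ‖ft f ξ‖) ξ +
      Bᶜ.indicator (fun ξ => 2 * M * ‖ft f ξ‖) ξ with hφdef
    have hφint : Integrable φ :=
      ((hInt.const_mul _).indicator measurableSet_closedBall).add
        ((hInt.const_mul _).indicator measurableSet_closedBall.compl)
    have hbound : ∀ᵐ ξ : EuclideanSpace ℝ (Fin n),
        ‖a (x, lam⁻¹ • ξ + ξ₀) - a (x, ξ₀)‖ * ‖ft f ξ‖ ≤ φ ξ := by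
      haveI : Nontrivial (EuclideanSpace ℝ (Fin n)) := nontrivial_of_ne ξ₀ 0 hξ₀
      have hnull : volume ({-(lam • ξ₀)} : Set (EuclideanSpace ℝ (Fin n))) = 0 :=
        measure_singleton _
      rw [ae_iff]
      refine measure_mono_null ?_ hnull
      intro ξ hξ
      simp only [Set.mem_setOf_eq, not_le] at hξ
      simp only [Set.mem_singleton_iff]
      by_contra hne
      apply absurd hξ
      push_neg
      -- ξ ≠ -(lam • ξ₀), so η := lam⁻¹ • ξ + ξ₀ ≠ 0
      have hηne : lam⁻¹ • ξ + ξ₀ ≠ 0 := by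
        intro h0
        apply hne
        have : lam⁻¹ • ξ = -ξ₀ := by
          have := h0
          rw [add_eq_zero_iff_eq_neg] at this
          exact this
        have h2 : lam • lam⁻¹ • ξ = lam • (-ξ₀) := by rw [this]
        rw [smul_smul, mul_inv_cancel₀ hlam0.ne', one_smul, smul_neg] at h2
        rw [h2]
      by_cases hξB : ξ ∈ B
      · have hdist : dist (lam⁻¹ • ξ + ξ₀) ξ₀ < δ := by
          rw [dist_eq_norm, add_sub_cancel_right, norm_smul, Real.norm_eq_abs,
            abs_of_pos (inv_pos.2 hlam0)]
          have hξR : ‖ξ‖ ≤ R := by simpa [hBdef, dist_zero_right] using hξB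
          have h1 : lam⁻¹ < δ / (R + 1) := by
            rw [inv_lt_comm₀ hlam0 (by positivity)]
            calc (δ / (R + 1))⁻¹ = (R + 1) / δ := by rw [inv_div]
              _ < lam := hlam
          calc lam⁻¹ * ‖ξ‖ ≤ lam⁻¹ * R :=
                mul_le_mul_of_nonneg_left hξR (by positivity)
            _ < δ / (R + 1) * (R + 1) := by
                rcases eq_or_lt_of_le hR0 with h|h
                · rw [← h]; simpa using (by positivity : (0:ℝ) < δ / (0 + 1) * (0 + 1))
                · exact mul_lt_mul'' h1 (by linarith) (by positivity) hR0
            _ = δ := by field_simp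
        have hmem1 : (x, lam⁻¹ • ξ + ξ₀) ∈ C := by
          refine ⟨hx, ?_⟩
          simp only [Metric.mem_closedBall]
          exact le_trans hdist.le (le_trans (min_le_right _ _) le_rfl)
        have hmem2 : (x, ξ₀) ∈ C := ⟨hx, Metric.mem_closedBall_self hr0.le⟩
        have hdd : dist ((x, lam⁻¹ • ξ + ξ₀) : EuclideanSpace ℝ (Fin n) × EuclideanSpace ℝ (Fin n)) (x, ξ₀) < δ₀ := by
          rw [Prod.dist_eq]
          simp only [dist_self]
          exact max_lt hδ₀ (hdist.trans_le (min_le_left _ _))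
        have := hδspec _ hmem1 _ hmem2 hdd
        rw [dist_eq_norm] at this
        have hφξ : φ ξ = ε / (2 * (G + 1)) * ‖ft f ξ‖ := by
          rw [hφdef]
          simp [Set.indicator_of_mem hξB, Set.indicator_of_notMem (Set.notMem_compl_iff.2 hξB)]
        rw [hφξ]
        exact mul_le_mul_of_nonneg_right this.le (norm_nonneg _)
      · have hφξ : φ ξ = 2 * M * ‖ft f ξ‖ := by
          rw [hφdef]
          simp [Set.indicator_of_notMem hξB, Set.indicator_of_mem (Set.mem_compl hξB)]
        rw [hφξ]
        refine mul_le_mul_of_nonneg_right ?_ (norm_nonneg _)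
        calc ‖a (x, lam⁻¹ • ξ + ξ₀) - a (x, ξ₀)‖
            ≤ ‖a (x, lam⁻¹ • ξ + ξ₀)‖ + ‖a (x, ξ₀)‖ := norm_sub_le _ _
          _ ≤ M + M := add_le_add (hMb x hx _ hηne) (hMb x hx _ hξ₀)
          _ = 2 * M := by ring
    have hmain : (∫ ξ, ‖a (x, lam⁻¹ • ξ + ξ₀) - a (x, ξ₀)‖ * ‖ft f ξ‖) ≤ ∫ ξ, φ ξ := by
      refine integral_mono_of_nonneg ?_ hφint hbound
      filter_upwards with ξ
      positivity
    have hφval : (∫ ξ, φ ξ) =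
        ε / (2 * (G + 1)) * (∫ ξ in B, ‖ft f ξ‖) + 2 * M * (∫ ξ in Bᶜ, ‖ft f ξ‖) := by
      rw [hφdef]
      rw [integral_add ((hInt.const_mul _).indicator measurableSet_closedBall)
        ((hInt.const_mul _).indicator measurableSet_closedBall.compl)]
      rw [integral_indicator measurableSet_closedBall,
        integral_indicator measurableSet_closedBall.compl,
        integral_const_mul, integral_const_mul]
    have hB1 : (∫ ξ in B, ‖ft f ξ‖) ≤ G := by
      rw [hGdef]
      exact setIntegral_le_integral hInt (by filter_upwards with ξ using norm_nonneg _)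
    have h1 : ε / (2 * (G + 1)) * (∫ ξ in B, ‖ft f ξ‖) < ε / 2 := by
      calc ε / (2 * (G + 1)) * (∫ ξ in B, ‖ft f ξ‖) ≤ ε / (2 * (G + 1)) * G :=
            mul_le_mul_of_nonneg_left hB1 hε'.le
        _ < ε / 2 := by
            rw [div_mul_eq_mul_div, div_lt_div_iff₀ (by positivity) (by norm_num)]
            nlinarith
    have h2 : 2 * M * (∫ ξ in Bᶜ, ‖ft f ξ‖) < ε / 2 := by
      have hnn : 0 ≤ ∫ ξ in Bᶜ, ‖ft f ξ‖ := integral_nonneg fun ξ => norm_nonneg _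
      have ht : ε / (4 * (M + 1)) * (4 * (M + 1)) = ε := div_mul_cancel₀ _ (by positivity)
      calc 2 * M * (∫ ξ in Bᶜ, ‖ft f ξ‖) ≤ 2 * M * (ε / (4 * (M + 1))) :=
            mul_le_mul_of_nonneg_left hRtail.le (by positivity)
        _ < ε / 2 := by nlinarith [hτ, hM0]
    calc (∫ ξ, ‖a (x, lam⁻¹ • ξ + ξ₀) - a (x, ξ₀)‖ * ‖ft f ξ‖) ≤ ∫ ξ, φ ξ := hmain
      _ = _ := hφval
      _ < ε / 2 + ε / 2 := add_lt_add h1 h2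
      _ = ε := by ring
  · -- x outside K: everything vanishes
    have : (fun ξ : EuclideanSpace ℝ (Fin n) =>
        ‖a (x, lam⁻¹ • ξ + ξ₀) - a (x, ξ₀)‖ * ‖ft f ξ‖) = fun _ => 0 := by
      funext ξ
      rw [hKa x _ hx, hKa x _ hx]
      simp
    rw [this, integral_zero]
    exact hε
end
end
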